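/- Let ξ be a square-integrable random variable, and let A ⊃ B be events with Pr(B) > 0. Then |E(ξ | A) − E(ξ | B)| ≤ ‖ξ‖₂ · (Pr(A \ B))^{1/2} / (Pr(A)^{1/2} Pr(B)^{1/2}) ≤ ‖ξ‖₂ / Pr(B)^{1/2}, where E(ξ | A) = E(1_A ξ)/Pr(A) and ‖ξ‖₂ = (E ξ²)^{1/2}. -/

import Mathlib

/-!
With `a = Pr(A)`, `b = Pr(B)` and `g = b·1_A − a·1_B`, one has
`E(ξ|A) − E(ξ|B) = E[ξ g] / (a b)`, and since `B ⊆ A`,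
`E[g²] = b²·Pr(A∖B) + (b − a)²·b = a b Pr(A∖B)`. Cauchy–Schwarz bounds `|E[ξ g]|` by
`‖ξ‖₂ √(a b Pr(A∖B))`, which is the first inequality; the second is `Pr(A∖B) ≤ Pr(A)`.
-/

open MeasureTheory

section

variable {Ω : Type*} [MeasurableSpace Ω] {μ : Measure Ω}

theorem abs_integral_mul_le_sqrt_mul_sqrt {f g : Ω → ℝ} (hf : MemLp f 2 μ) (hg : MemLp g 2 μ) :
    |∫ ω, f ω * g ω ∂μ| ≤ √(∫ ω, f ω ^ 2 ∂μ) * √(∫ ω, g ω ^ 2 ∂μ) := by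
  have inner_toLp {u v : Ω → ℝ} (hu : MemLp u 2 μ) (hv : MemLp v 2 μ) :
      inner ℝ (hu.toLp u) (hv.toLp v) = ∫ ω, u ω * v ω ∂μ := by
    rw [L2.inner_def]
    refine integral_congr_ae ?_
    filter_upwards [hu.coeFn_toLp, hv.coeFn_toLp] with ω hu' hv'
    simp [hu', hv', mul_comm]
  have norm_toLp {u : Ω → ℝ} (hu : MemLp u 2 μ) : ‖hu.toLp u‖ = √(∫ ω, u ω ^ 2 ∂μ) := by
    simp only [sq, ← inner_toLp hu hu, real_inner_self_eq_norm_mul_norm,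
      Real.sqrt_mul_self (norm_nonneg _)]
  rw [← inner_toLp hf hg, ← norm_toLp hf, ← norm_toLp hg]
  exact abs_real_inner_le_norm _ _

theorem integral_mul_indicator_sub_indicator {ξ : Ω → ℝ} (hξ : Integrable ξ μ) {A B : Set Ω}
    (hA : MeasurableSet A) (hB : MeasurableSet B) (s t : ℝ) :
    ∫ ω, ξ ω * (s * A.indicator 1 ω - t * B.indicator 1 ω) ∂μ
      = s * ∫ ω in A, ξ ω ∂μ - t * ∫ ω in B, ξ ω ∂μ := by
  have pointwise : (fun ω ↦ ξ ω * (s * A.indicator 1 ω - t * B.indicator 1 ω))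
      = fun ω ↦ s * A.indicator ξ ω - t * B.indicator ξ ω := by
    funext ω
    by_cases hωA : ω ∈ A <;> by_cases hωB : ω ∈ B <;> simp [hωA, hωB] <;> ring
  rw [pointwise, integral_sub ((hξ.indicator hA).const_mul s) ((hξ.indicator hB).const_mul t),
    integral_const_mul, integral_const_mul, integral_indicator hA, integral_indicator hB]

theorem integral_sq_indicator_sub_indicator [IsFiniteMeasure μ] {A B : Set Ω}
    (hA : MeasurableSet A) (hB : MeasurableSet B) (hBA : B ⊆ A) (s t : ℝ) :
    ∫ ω, (s * A.indicator 1 ω - t * B.indicator 1 ω) ^ 2 ∂μ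
      = s ^ 2 * μ.real (A \ B) + (s - t) ^ 2 * μ.real B := by
  have pointwise : (fun ω ↦ (s * A.indicator 1 ω - t * B.indicator 1 ω) ^ 2)
      = fun ω ↦ (A \ B).indicator (fun _ ↦ s ^ 2) ω + B.indicator (fun _ ↦ (s - t) ^ 2) ω := by
    funext ω
    by_cases hωB : ω ∈ B
    · simp [hωB, hBA hωB]
    · by_cases hωA : ω ∈ A <;> simp [hωA, hωB]
  rw [pointwise, integral_add ((integrable_const _).indicator (hA.diff hB))
      ((integrable_const _).indicator hB), integral_indicator_const _ (hA.diff hB),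
    integral_indicator_const _ hB, smul_eq_mul, smul_eq_mul, mul_comm, mul_comm (μ.real B)]

theorem abs_setIntegral_div_sub_setIntegral_div_le [IsFiniteMeasure μ] {ξ : Ω → ℝ}
    (hξ : MemLp ξ 2 μ) {A B : Set Ω} (hA : MeasurableSet A) (hB : MeasurableSet B)
    (hBA : B ⊆ A) (hBpos : 0 < μ B) :
    |(∫ ω in A, ξ ω ∂μ) / μ.real A - (∫ ω in B, ξ ω ∂μ) / μ.real B|
      ≤ √(∫ ω, ξ ω ^ 2 ∂μ) * √(μ.real (A \ B)) / (√(μ.real A) * √(μ.real B)) := by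
  set a := μ.real A
  set b := μ.real B
  set d := μ.real (A \ B)
  have hb : 0 < b := ENNReal.toReal_pos hBpos.ne' (measure_ne_top μ B)
  have ha : 0 < a := hb.trans_le (measureReal_mono hBA)
  have had : a = b + d := by
    have : d = a - b := measureReal_sdiff hBA hB
    linarith
  set g : Ω → ℝ := fun ω ↦ b * A.indicator 1 ω - a * B.indicator 1 ω
  have hg : MemLp g 2 μ :=
    ((memLp_indicator_const 2 hA (1 : ℝ) (Or.inr (measure_ne_top μ A))).const_mul b).sub
      ((memLp_indicator_const 2 hB (1 : ℝ) (Or.inr (measure_ne_top μ B))).const_mul a)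
  have cauchy_schwarz := abs_integral_mul_le_sqrt_mul_sqrt hξ hg
  rw [integral_mul_indicator_sub_indicator (hξ.integrable one_le_two) hA hB,
    integral_sq_indicator_sub_indicator hA hB hBA,
    show b ^ 2 * d + (b - a) ^ 2 * b = a * b * d by rw [had]; ring] at cauchy_schwarz
  calc |(∫ ω in A, ξ ω ∂μ) / a - (∫ ω in B, ξ ω ∂μ) / b|
      = |b * ∫ ω in A, ξ ω ∂μ - a * ∫ ω in B, ξ ω ∂μ| / (a * b) := by
        rw [div_sub_div _ _ ha.ne' hb.ne', abs_div, abs_of_pos (mul_pos ha hb)]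
        ring_nf
    _ ≤ √(∫ ω, ξ ω ^ 2 ∂μ) * √(a * b * d) / (a * b) := by gcongr
    _ = √(∫ ω, ξ ω ^ 2 ∂μ) * √d / (√a * √b) := by
        rw [Real.sqrt_mul (by positivity), Real.sqrt_mul ha.le]
        field_simp
        rw [Real.sq_sqrt ha.le, Real.sq_sqrt hb.le]
        ring

end

theorem mul_sqrt_div_le_div_sqrt {S a b d : ℝ} (hS : 0 ≤ S) (hda : d ≤ a) :
    S * √d / (√a * √b) ≤ S / √b := by
  calc S * √d / (√a * √b) = S * (√d / √a) / √b := by ring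
    _ ≤ S / √b := by
      gcongr
      exact mul_le_of_le_one_right hS
        (div_le_one_of_le₀ (Real.sqrt_le_sqrt hda) (Real.sqrt_nonneg a))

/-- For a square-integrable `ξ` and events `B ⊆ A` with `Pr(B) > 0`,
`|E(ξ|A) − E(ξ|B)| ≤ ‖ξ‖₂ √(Pr(A∖B)) / (√Pr(A) √Pr(B)) ≤ ‖ξ‖₂ / √Pr(B)`,
where `E(ξ|A) = E(1_A ξ)/Pr(A)` and `‖ξ‖₂ = (E ξ²)^{1/2}`. -/
theorem stmt_14 {Ω : Type*} [MeasurableSpace Ω] (μ : Measure Ω) [IsProbabilityMeasure μ]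
    (ξ : Ω → ℝ) (hξ : MemLp ξ 2 μ)
    (A B : Set Ω) (hA : MeasurableSet A) (hB : MeasurableSet B)
    (hBA : B ⊆ A) (hBpos : 0 < μ B) :
    |(∫ ω in A, ξ ω ∂μ) / (μ A).toReal - (∫ ω in B, ξ ω ∂μ) / (μ B).toReal|
        ≤ Real.sqrt (∫ ω, ξ ω ^ 2 ∂μ) * Real.sqrt ((μ (A \ B)).toReal)
            / (Real.sqrt ((μ A).toReal) * Real.sqrt ((μ B).toReal))
      ∧ Real.sqrt (∫ ω, ξ ω ^ 2 ∂μ) * Real.sqrt ((μ (A \ B)).toReal)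
            / (Real.sqrt ((μ A).toReal) * Real.sqrt ((μ B).toReal))
          ≤ Real.sqrt (∫ ω, ξ ω ^ 2 ∂μ) / Real.sqrt ((μ B).toReal) :=
  ⟨abs_setIntegral_div_sub_setIntegral_div_le hξ hA hB hBA hBpos,
    mul_sqrt_div_le_div_sqrt (Real.sqrt_nonneg _) (measureReal_mono Set.sdiff_subset)⟩
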